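/- For all a > 0, a·∫₀^a e^{-x²/2} dx + e^{-a²/2} > √(1 + a²). -/

import Mathlib

open Real intervalIntegral Set Filter Topology

noncomputable def myf (a : ℝ) : ℝ :=
  (∫ x in (0:ℝ)..a, Real.exp (-(x ^ 2) / 2)) + Real.exp (-(a ^ 2) / 2) / a
    - Real.sqrt (1 + a ^ 2) / a

lemma cont_int : Continuous fun x : ℝ => Real.exp (-(x ^ 2) / 2) := by
  continuity

lemma hd_exp (a : ℝ) : HasDerivAt (fun a : ℝ => Real.exp (-(a ^ 2) / 2))
    (-a * Real.exp (-(a ^ 2) / 2)) a := by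
  have h : HasDerivAt (fun a : ℝ => -(a ^ 2) / 2) (-a) a := by
    have := ((hasDerivAt_pow 2 a).neg).div_const 2
    refine this.congr_deriv ?_; ring
  simpa [mul_comm] using h.exp

lemma hd_sqrt (a : ℝ) : HasDerivAt (fun a : ℝ => Real.sqrt (1 + a ^ 2))
    (a / Real.sqrt (1 + a ^ 2)) a := by
  have hpos : (0:ℝ) < 1 + a ^ 2 := by positivity
  have hin : HasDerivAt (fun a : ℝ => 1 + a ^ 2) (2 * a) a := by
    simpa using (hasDerivAt_pow 2 a).const_add 1
  have := (Real.hasDerivAt_sqrt (ne_of_gt hpos)).comp a hin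
  refine this.congr_deriv ?_
  field_simp

lemma myf_deriv (a : ℝ) (ha : 0 < a) :
    HasDerivAt myf ((1 / Real.sqrt (1 + a ^ 2) - Real.exp (-(a ^ 2) / 2)) / a ^ 2) a := by
  have ha0 : a ≠ 0 := ne_of_gt ha
  have hpos : (0:ℝ) < 1 + a ^ 2 := by positivity
  have hsq : Real.sqrt (1 + a ^ 2) ≠ 0 := by positivity
  have h1 : HasDerivAt (fun a : ℝ => ∫ x in (0:ℝ)..a, Real.exp (-(x ^ 2) / 2))
      (Real.exp (-(a ^ 2) / 2)) a := by
    exact intervalIntegral.integral_hasDerivAt_right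
      (cont_int.intervalIntegrable _ _)
      cont_int.aestronglyMeasurable.stronglyMeasurableAtFilter
      cont_int.continuousAt
  have h2 := hd_exp a
  have h3 := hd_sqrt a
  have h4 := (h2.div (hasDerivAt_id a) ha0)
  have h5 := (h3.div (hasDerivAt_id a) ha0)
  have := (h1.add h4).sub h5
  refine this.congr_deriv ?_
  have hsq2 : Real.sqrt (1 + a ^ 2) * Real.sqrt (1 + a ^ 2) = 1 + a ^ 2 :=
    Real.mul_self_sqrt (le_of_lt hpos)
  simp only [id]; field_simp
  ring_nf
  linarith [Real.sq_sqrt hpos.le]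

lemma deriv_pos (a : ℝ) (ha : 0 < a) :
    0 < (1 / Real.sqrt (1 + a ^ 2) - Real.exp (-(a ^ 2) / 2)) / a ^ 2 := by
  have hpos : (0:ℝ) < 1 + a ^ 2 := by positivity
  have hsq : (0:ℝ) < Real.sqrt (1 + a ^ 2) := Real.sqrt_pos.mpr hpos
  have key : Real.sqrt (1 + a ^ 2) < Real.exp (a ^ 2 / 2) := by
    have h1 : 1 + a ^ 2 < Real.exp (a ^ 2) := by
      have := Real.add_one_lt_exp (x := a ^ 2) (by positivity)
      linarith
    have h2 : Real.exp (a ^ 2) = Real.exp (a ^ 2 / 2) ^ 2 := by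
      rw [← Real.exp_nat_mul]; ring_nf
    nlinarith [Real.sq_sqrt (le_of_lt hpos), Real.exp_pos (a ^ 2 / 2)]
  have h3 : Real.exp (-(a ^ 2) / 2) < 1 / Real.sqrt (1 + a ^ 2) := by
    have he : Real.exp (-(a ^ 2) / 2) = 1 / Real.exp (a ^ 2 / 2) := by
      rw [eq_div_iff (ne_of_gt (Real.exp_pos _)), ← Real.exp_add,
        show -(a ^ 2) / 2 + a ^ 2 / 2 = 0 by ring, Real.exp_zero]
    rw [he]
    exact one_div_lt_one_div_of_lt hsq key
  have : 0 < 1 / Real.sqrt (1 + a ^ 2) - Real.exp (-(a ^ 2) / 2) := by linarith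
  positivity

lemma myf_tendsto : Tendsto myf (𝓝[>] (0:ℝ)) (𝓝 0) := by
  have heq : ∀ a : ℝ, a ≠ 0 → myf a =
      (∫ x in (0:ℝ)..a, Real.exp (-(x ^ 2) / 2)) +
        ((Real.exp (-(a ^ 2) / 2) - Real.sqrt (1 + a ^ 2)) - (1 - 1)) / (a - 0) := by
    intro a h0
    unfold myf
    field_simp
    ring
  -- first part tends to 0
  have h1 : Tendsto (fun a : ℝ => ∫ x in (0:ℝ)..a, Real.exp (-(x ^ 2) / 2)) (𝓝 0)
      (𝓝 0) := by
    have hc : ContinuousAt (fun a : ℝ => ∫ x in (0:ℝ)..a, Real.exp (-(x ^ 2) / 2)) 0 :=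
      (intervalIntegral.integral_hasDerivAt_right (cont_int.intervalIntegrable _ _)
        cont_int.aestronglyMeasurable.stronglyMeasurableAtFilter
        cont_int.continuousAt).continuousAt
    simpa using hc.tendsto
  -- second part: slope of d at 0 tends to d'(0) = 0
  have hd : HasDerivAt (fun a : ℝ => Real.exp (-(a ^ 2) / 2) - Real.sqrt (1 + a ^ 2)) 0 0 := by
    have := (hd_exp 0).sub (hd_sqrt 0)
    exact this.congr_deriv (by simp)
  have h2 : Tendsto (fun a : ℝ =>
      ((Real.exp (-(a ^ 2) / 2) - Real.sqrt (1 + a ^ 2)) - (1 - 1)) / (a - 0))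
      (𝓝[≠] (0:ℝ)) (𝓝 0) := by
    have := hasDerivAt_iff_tendsto_slope.mp hd
    refine this.congr' ?_
    filter_upwards [self_mem_nhdsWithin] with a ha
    simp [slope_def_field, Real.sqrt_one, div_eq_inv_mul]
  have h2' : Tendsto (fun a : ℝ =>
      ((Real.exp (-(a ^ 2) / 2) - Real.sqrt (1 + a ^ 2)) - (1 - 1)) / (a - 0))
      (𝓝[>] (0:ℝ)) (𝓝 0) :=
    h2.mono_left (nhdsWithin_mono _ (fun x hx => ne_of_gt hx))
  have h1' : Tendsto (fun a : ℝ => ∫ x in (0:ℝ)..a, Real.exp (-(x ^ 2) / 2))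
      (𝓝[>] (0:ℝ)) (𝓝 0) := h1.mono_left nhdsWithin_le_nhds
  have := h1'.add h2'
  rw [add_zero] at this
  refine this.congr' ?_
  filter_upwards [self_mem_nhdsWithin] with a ha
  exact (heq a (ne_of_gt ha)).symm

lemma myf_mono : StrictMonoOn myf (Ioi (0:ℝ)) := by
  have hconv : Convex ℝ (Ioi (0:ℝ)) := convex_Ioi 0
  refine StrictMonoOn.mono (s := Ioi 0) ?_ le_rfl
  refine strictMonoOn_of_deriv_pos hconv ?_ ?_
  · intro x hx
    exact (myf_deriv x hx).continuousAt.continuousWithinAt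
  · intro x hx
    rw [interior_Ioi] at hx
    rw [(myf_deriv x hx).deriv]
    exact deriv_pos x hx

lemma myf_pos (a : ℝ) (ha : 0 < a) : 0 < myf a := by
  have h2 : 0 < a / 2 := by positivity
  have hlt : myf (a / 2) < myf a := myf_mono h2 ha (by linarith)
  have hge : 0 ≤ myf (a / 2) := by
    refine le_of_tendsto myf_tendsto ?_
    have hmem : Ioo (0:ℝ) (a / 2) ∈ 𝓝[>] (0:ℝ) :=
      Ioo_mem_nhdsGT_of_mem ⟨le_refl 0, h2⟩
    filter_upwards [hmem] with x hx
    exact le_of_lt (myf_mono hx.1 h2 hx.2)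
  linarith

/-- for all `a > 0`, `a·∫₀^a e^{-x²/2} dx + e^{-a²/2} > √(1 + a²)`. -/
theorem stmt9 (a : ℝ) (ha : 0 < a) :
    Real.sqrt (1 + a ^ 2) <
      a * (∫ x in (0 : ℝ)..a, Real.exp (-(x ^ 2) / 2)) + Real.exp (-(a ^ 2) / 2) := by
  have h := myf_pos a ha
  unfold myf at h
  have ha0 : a ≠ 0 := ne_of_gt ha
  have := mul_pos ha h
  have heq : a * ((∫ x in (0:ℝ)..a, Real.exp (-(x ^ 2) / 2)) + Real.exp (-(a ^ 2) / 2) / a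
      - Real.sqrt (1 + a ^ 2) / a) =
      a * (∫ x in (0:ℝ)..a, Real.exp (-(x ^ 2) / 2)) + Real.exp (-(a ^ 2) / 2)
        - Real.sqrt (1 + a ^ 2) := by
    field_simp
  rw [heq] at this
  linarith
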